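/- Let β = 2^{1/4}, P = [[5+β²−3β−2β³, 1],[−1, 0]] and Q = [[3+2β², 1],[−1, 0]] in SL(2,ℝ), and let σ₂(P) = [[5+β²+3β+2β³, 1],[−1, 0]]. Then: (a) |tr(P)| < 2 and P has infinite order in SL(2,ℝ); (b) |tr(Q)| > 2; (c) |tr(σ₂(P))| > 2; and (d) σ₂(P) and Q have no common eigenvector in ℂ². -/

import Mathlib

/-!
The trace estimates only need `1.18 < β < 1.19`. Since `X⁴ - 2` is irreducible over `ℚ`
(Eisenstein at `2`), `β ↦ -β` extends to a field embedding of `ℚ(β)`, so a relation `Pⁿ = 1`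
would transport to `σ₂(P)ⁿ = 1`. But `σ₂(P) = [[t, 1], [-1, 0]]` with `t > 2` has the
eigenvector `(μ, -1)` for the root `μ > 1` of `μ² - tμ + 1`, so no positive power of it is `1`.
Two matrices `[[a, 1], [-1, 0]]`, `[[b, 1], [-1, 0]]` with `a ≠ b` have no common eigenvector:
the second row forces equal eigenvalues, and then `(a - b) v₀ = 0`.
-/

/-- `β = 2^(1/4)`, the real fourth root of `2`. -/
noncomputable def rootBeta : ℝ := (2 : ℝ) ^ ((1 : ℝ) / 4)

/-- The matrix `P = [[5+β²−3β−2β³, 1],[−1, 0]] ∈ SL(2,ℝ)`. -/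
noncomputable def matP : Matrix.SpecialLinearGroup (Fin 2) ℝ :=
  ⟨!![5 + rootBeta ^ 2 - 3 * rootBeta - 2 * rootBeta ^ 3, 1; -1, 0], by
    simp [Matrix.det_fin_two_of]⟩

/-- The matrix `Q = [[3+2β², 1],[−1, 0]] ∈ SL(2,ℝ)`. -/
noncomputable def matQ : Matrix.SpecialLinearGroup (Fin 2) ℝ :=
  ⟨!![3 + 2 * rootBeta ^ 2, 1; -1, 0], by simp [Matrix.det_fin_two_of]⟩

/-- The matrix `σ₂(P) = [[5+β²+3β+2β³, 1],[−1, 0]] ∈ SL(2,ℝ)`, the image of `P` under the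
Galois embedding `β ↦ −β` applied entrywise. -/
noncomputable def matP2 : Matrix.SpecialLinearGroup (Fin 2) ℝ :=
  ⟨!![5 + rootBeta ^ 2 + 3 * rootBeta + 2 * rootBeta ^ 3, 1; -1, 0], by
    simp [Matrix.det_fin_two_of]⟩

open Polynomial

theorem irreducible_X_pow_sub_C_prime {p : ℕ} (hp : p.Prime) {n : ℕ} (hn : 0 < n) :
    Irreducible (X ^ n - C (p : ℚ)) := by
  have hmonic : (X ^ n - C (p : ℤ)).Monic := monic_X_pow_sub_C _ hn.ne'
  have hdeg : (X ^ n - C (p : ℤ)).natDegree = n := natDegree_X_pow_sub_C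
  have hprime : (Ideal.span {(p : ℤ)}).IsPrime :=
    (Ideal.span_singleton_prime (by exact_mod_cast hp.ne_zero)).mpr (Nat.prime_iff_prime_int.mp hp)
  have heis : (X ^ n - C (p : ℤ)).IsEisensteinAt (Ideal.span {(p : ℤ)}) := by
    refine hmonic.isEisensteinAt_of_mem_of_notMem hprime.ne_top (fun {k} hk => ?_) ?_
    · rw [hdeg] at hk
      rw [Ideal.mem_span_singleton]
      rcases Nat.eq_zero_or_pos k with rfl | hk0
      · simp [hn.ne]
      · simp [coeff_X_pow, hk.ne, hk0.ne']
    · rw [Ideal.span_singleton_pow, Ideal.mem_span_singleton]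
      simp only [hn.ne, coeff_sub, coeff_X_pow, coeff_C_zero, if_false, zero_sub, dvd_neg]
      have : ¬ p ^ 2 ∣ p := fun h => by
        nlinarith [Nat.le_of_dvd hp.pos h, hp.two_le]
      exact_mod_cast this
  have hZ := heis.irreducible hprime hmonic.isPrimitive (by rwa [hdeg])
  simpa using (hmonic.irreducible_iff_irreducible_map_fraction_map (K := ℚ)).mp hZ

namespace Matrix

variable {n : Type*} [Fintype n] [DecidableEq n]

theorem isOfFinOrder_map_iff {K R : Type*} [Field K] [Ring R] [Nontrivial R] (f : K →+* R)
    (M : Matrix n n K) : IsOfFinOrder (M.map f) ↔ IsOfFinOrder M :=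
  (Matrix.map_injective f.injective).isOfFinOrder_iff
    (f := (f.mapMatrix : Matrix n n K →+* Matrix n n R).toMonoidHom)

theorem isOfFinOrder_map_aeval_iff {K L : Type*} [Field K] [Field L] [Algebra K L] {p : K[X]}
    [Fact (Irreducible p)] {b : L} (hb : aeval b p = 0) (M : Matrix n n K[X]) :
    IsOfFinOrder (M.map (aeval b)) ↔ IsOfFinOrder (M.map (AdjoinRoot.mk p)) := by
  have hlift : M.map (aeval b) = (M.map (AdjoinRoot.mk p)).map (AdjoinRoot.lift _ b hb) := by
    ext i j
    simp [AdjoinRoot.lift_mk, aeval_def]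
  rw [hlift, isOfFinOrder_map_iff]

theorem isOfFinOrder_map_aeval_of_aeval_eq_zero {K L L' : Type*} [Field K] [Field L] [Field L']
    [Algebra K L] [Algebra K L'] {p : K[X]} (hp : Irreducible p) {b : L} {b' : L'}
    (hb : aeval b p = 0) (hb' : aeval b' p = 0) {M : Matrix n n K[X]}
    (hM : IsOfFinOrder (M.map (aeval b))) : IsOfFinOrder (M.map (aeval b')) := by
  have : Fact (Irreducible p) := ⟨hp⟩
  exact (isOfFinOrder_map_aeval_iff hb' M).mpr ((isOfFinOrder_map_aeval_iff hb M).mp hM)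

theorem not_isOfFinOrder_of_mulVec_eq_smul {R : Type*} [Field R] [LinearOrder R]
    [IsStrictOrderedRing R] {A : Matrix n n R} {v : n → R} {μ : R} (hv : v ≠ 0) (hμ : 1 < μ)
    (hAv : A *ᵥ v = μ • v) : ¬ IsOfFinOrder A := by
  have hpow (k : ℕ) : (A ^ k) *ᵥ v = μ ^ k • v := by
    induction k with
    | zero => simp
    | succ k ih => rw [pow_succ, ← mulVec_mulVec, hAv, mulVec_smul, ih, smul_smul, pow_succ']
  rw [isOfFinOrder_iff_pow_eq_one]
  rintro ⟨k, hk, hAk⟩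
  have hv_fixed : μ ^ k • v = (1 : R) • v := by rw [← hpow, hAk, one_mulVec, one_smul]
  exact (one_lt_pow₀ hμ hk.ne').ne' (smul_left_injective R hv hv_fixed)

theorem map_companion {R S F : Type*} [Ring R] [Ring S] [FunLike F R S] [RingHomClass F R S]
    (f : F) (t : R) : (!![t, 1; -1, 0] : Matrix (Fin 2) (Fin 2) R).map f = !![f t, 1; -1, 0] := by
  ext i j
  fin_cases i <;> fin_cases j <;> simp

theorem companion_mulVec_eq_smul {R : Type*} [CommRing R] {t μ : R} (hμ : μ ^ 2 + 1 = t * μ) :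
    !![t, 1; -1, 0] *ᵥ ![μ, -1] = μ • ![μ, -1] := by
  ext i
  fin_cases i
  · simp only [mulVec, dotProduct, Fin.zero_eta, Fin.isValue, of_apply, cons_val', cons_val_fin_one,
      cons_val_zero, Fin.sum_univ_two, cons_val_one, mul_neg, mul_one, Pi.smul_apply, smul_eq_mul]
    linear_combination -hμ
  · simp [mulVec, dotProduct, Fin.sum_univ_two]

theorem not_isOfFinOrder_companion_of_two_lt {t : ℝ} (ht : 2 < t) :
    ¬ IsOfFinOrder (!![t, 1; -1, 0] : Matrix (Fin 2) (Fin 2) ℝ) := by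
  obtain ⟨μ, hμ1, hμ⟩ : ∃ μ : ℝ, 1 < μ ∧ μ ^ 2 + 1 = t * μ := by
    have hsq := Real.sq_sqrt (by nlinarith : (0 : ℝ) ≤ t ^ 2 - 4)
    refine ⟨(t + √(t ^ 2 - 4)) / 2, ?_, ?_⟩
    · linarith [Real.sqrt_nonneg (t ^ 2 - 4)]
    · linear_combination hsq / 4
  exact not_isOfFinOrder_of_mulVec_eq_smul (by simp) hμ1 (companion_mulVec_eq_smul hμ)

theorem not_exists_common_eigenvector_companion {K : Type*} [Field K] {a b : K} (hab : a ≠ b) :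
    ¬ ∃ v : Fin 2 → K, v ≠ 0 ∧ (∃ c : K, !![a, 1; -1, 0] *ᵥ v = c • v) ∧
      (∃ c : K, !![b, 1; -1, 0] *ᵥ v = c • v) := by
  rintro ⟨v, hv, ⟨c, hc⟩, ⟨d, hd⟩⟩
  have hc0 := congrFun hc 0
  have hc1 := congrFun hc 1
  have hd0 := congrFun hd 0
  have hd1 := congrFun hd 1
  simp only [mulVec, dotProduct, Fin.isValue, of_apply, cons_val', cons_val_fin_one, cons_val_zero,
    Fin.sum_univ_two, cons_val_one, one_mul, Pi.smul_apply, smul_eq_mul, neg_mul, zero_mul,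
    add_zero] at hc0 hc1 hd0 hd1
  have hv0 : v 0 ≠ 0 := fun h0 => hv <| by
    ext i
    fin_cases i
    · exact h0
    · simpa [h0] using hc0
  have hv1 : v 1 ≠ 0 := fun h1 => hv0 (by simpa [h1] using hc1)
  have hcd : c = d := mul_right_cancel₀ hv1 (hc1.symm.trans hd1)
  exact hab (mul_right_cancel₀ hv0 (by linear_combination hc0 - hd0 + v 0 * hcd))

end Matrix

theorem rootBeta_pow_four : rootBeta ^ 4 = 2 := by
  rw [rootBeta, ← Real.rpow_natCast, ← Real.rpow_mul zero_le_two]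
  norm_num

theorem rootBeta_pos : 0 < rootBeta := Real.rpow_pos_of_pos two_pos _

theorem rootBeta_mem_Ioo : rootBeta ∈ Set.Ioo 1.18 1.19 := by
  have h4 := rootBeta_pow_four
  constructor
  · by_contra! h
    nlinarith [pow_le_pow_left₀ rootBeta_pos.le h 4]
  · by_contra! h
    nlinarith [pow_le_pow_left₀ (by norm_num) h 4]

theorem two_lt_trace_matP2 : 2 < 5 + rootBeta ^ 2 + 3 * rootBeta + 2 * rootBeta ^ 3 := by
  nlinarith [rootBeta_pos, pow_pos rootBeta_pos 3]

theorem not_isOfFinOrder_matP : ¬ IsOfFinOrder matP := by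
  intro hP
  let F : ℚ[X] := 5 + X ^ 2 - 3 * X - 2 * X ^ 3
  have hroot {b : ℝ} (hb : b ^ 4 = 2) : aeval b (X ^ 4 - C ((2 : ℕ) : ℚ)) = 0 := by simp [hb]
  have hmap (b : ℝ) :
      (!![F, 1; -1, 0]).map (aeval b) = !![5 + b ^ 2 - 3 * b - 2 * b ^ 3, 1; -1, 0] := by
    simp [Matrix.map_companion, F, map_ofNat]
  have hconj := Matrix.isOfFinOrder_map_aeval_of_aeval_eq_zero
    (irreducible_X_pow_sub_C_prime Nat.prime_two four_pos) (hroot rootBeta_pow_four)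
    (hroot ((Even.neg_pow (by decide) _).trans rootBeta_pow_four))
    (by rw [hmap]; exact Matrix.SpecialLinearGroup.coeMonoidHom.isOfFinOrder hP)
  rw [hmap] at hconj
  exact Matrix.not_isOfFinOrder_companion_of_two_lt (by linear_combination two_lt_trace_matP2) hconj

/-- (a) `P` is elliptic (`|tr P| < 2`) of infinite order; (b) `Q` is hyperbolic
(`|tr Q| > 2`); (c) `σ₂(P)` is hyperbolic; (d) `σ₂(P)` and `Q` have no common eigenvector
in `ℂ²`. -/
theorem stmt14 :
    (|Matrix.trace ((matP : Matrix (Fin 2) (Fin 2) ℝ))| < 2 ∧ ¬ IsOfFinOrder matP) ∧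
    2 < |Matrix.trace ((matQ : Matrix (Fin 2) (Fin 2) ℝ))| ∧
    2 < |Matrix.trace ((matP2 : Matrix (Fin 2) (Fin 2) ℝ))| ∧
    ¬ ∃ v : Fin 2 → ℂ, v ≠ 0 ∧
      (∃ c : ℂ, Matrix.mulVec
        (((matP2 : Matrix (Fin 2) (Fin 2) ℝ)).map (Complex.ofReal)) v = c • v) ∧
      (∃ c : ℂ, Matrix.mulVec
        (((matQ : Matrix (Fin 2) (Fin 2) ℝ)).map (Complex.ofReal)) v = c • v) := by
  obtain ⟨hβlo, hβhi⟩ := rootBeta_mem_Ioo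
  have htrP2 := two_lt_trace_matP2
  have htrQ : 2 < 3 + 2 * rootBeta ^ 2 := by nlinarith
  simp only [matP, matQ, matP2, Matrix.trace_fin_two_of, add_zero]
  refine ⟨⟨abs_lt.mpr ⟨by nlinarith, by nlinarith⟩, not_isOfFinOrder_matP⟩,
    htrQ.trans_le (le_abs_self _), htrP2.trans_le (le_abs_self _), ?_⟩
  have hmap (t : ℝ) : (!![t, 1; -1, 0] : Matrix (Fin 2) (Fin 2) ℝ).map Complex.ofReal =
      !![(t : ℂ), 1; -1, 0] := Matrix.map_companion Complex.ofRealHom t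
  rw [hmap, hmap]
  exact Matrix.not_exists_common_eigenvector_companion (Complex.ofReal_injective.ne (by nlinarith))
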